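/- arXiv:1906.01777 — 8 statements merged into one kernel-verified Lean document; each statement's English description precedes it below -/
import Mathlib

section
/- Fix a real privacy budget ε > 0 and a real δ with 0 ≤ δ ≤ 1. Define p(x) = ((e^ε + 2δ − 1)·x + e^ε + 1) / (2(e^ε + 1)). Then for every x ∈ [−1, 1] one has 0 ≤ p(x) ≤ 1, and for all x, x' ∈ [−1, 1] both inequalities p(x) ≤ e^ε·p(x') + δ and 1 − p(x) ≤ e^ε·(1 − p(x')) + δ hold. (Hence the one-dimensional mechanism that, on input x ∈ [−1,1], outputs (e^ε+1)/(e^ε+2δ−1) with probability p(x) and −(e^ε+1)/(e^ε+2δ−1) with probability 1−p(x) satisfies (ε, δ)-local differential privacy.) -/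
/-- The one-dimensional numeric mechanism under `(ε, δ)`-LDP: with
`p x = ((e^ε + 2δ − 1)x + e^ε + 1)/(2(e^ε + 1))`, for every `x ∈ [−1,1]` the value `p x` is a
valid probability, and for all `x, x' ∈ [−1,1]` both `p x ≤ e^ε · p x' + δ` and
`1 − p x ≤ e^ε · (1 − p x') + δ`. -/
theorem stmt_0 (ε δ : ℝ) (hε : 0 < ε) (hδ0 : 0 ≤ δ) (hδ1 : δ ≤ 1)
    (p : ℝ → ℝ)
    (hp : ∀ x, p x = ((Real.exp ε + 2 * δ - 1) * x + Real.exp ε + 1) / (2 * (Real.exp ε + 1))) :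
    (∀ x ∈ Set.Icc (-1 : ℝ) 1, 0 ≤ p x ∧ p x ≤ 1) ∧
    (∀ x ∈ Set.Icc (-1 : ℝ) 1, ∀ x' ∈ Set.Icc (-1 : ℝ) 1,
      p x ≤ Real.exp ε * p x' + δ ∧ 1 - p x ≤ Real.exp ε * (1 - p x') + δ) := by
  have hE : 1 < Real.exp ε := by
    have := Real.add_one_le_exp ε
    linarith
  have hD : (0:ℝ) < 2 * (Real.exp ε + 1) := by linarith
  constructor
  · rintro x ⟨hx1, hx2⟩
    rw [hp x]
    refine ⟨div_nonneg (by nlinarith) hD.le, ?_⟩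
    rw [div_le_one hD]
    nlinarith
  · rintro x ⟨hx1, hx2⟩ x' ⟨hx1', hx2'⟩
    rw [hp x, hp x']
    constructor
    · have h : Real.exp ε * (((Real.exp ε + 2 * δ - 1) * x' + Real.exp ε + 1) / (2 * (Real.exp ε + 1))) + δ
          = (Real.exp ε * ((Real.exp ε + 2 * δ - 1) * x' + Real.exp ε + 1) + δ * (2 * (Real.exp ε + 1))) / (2 * (Real.exp ε + 1)) := by
        field_simp
      rw [h, div_le_div_iff₀ hD hD]
      have hc : (0:ℝ) ≤ Real.exp ε + 2 * δ - 1 := by linarith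
      nlinarith [mul_nonneg hc (by linarith : (0:ℝ) ≤ 1 - x),
        mul_nonneg (mul_nonneg (by positivity : (0:ℝ) ≤ Real.exp ε) hc) (by linarith : (0:ℝ) ≤ x' + 1)]
    · have h1 : 1 - ((Real.exp ε + 2 * δ - 1) * x + Real.exp ε + 1) / (2 * (Real.exp ε + 1))
          = (2 * (Real.exp ε + 1) - ((Real.exp ε + 2 * δ - 1) * x + Real.exp ε + 1)) / (2 * (Real.exp ε + 1)) := by
        field_simp
      have h2 : Real.exp ε * (1 - ((Real.exp ε + 2 * δ - 1) * x' + Real.exp ε + 1) / (2 * (Real.exp ε + 1))) + δ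
          = (Real.exp ε * (2 * (Real.exp ε + 1) - ((Real.exp ε + 2 * δ - 1) * x' + Real.exp ε + 1)) + δ * (2 * (Real.exp ε + 1))) / (2 * (Real.exp ε + 1)) := by
        field_simp
      rw [h1, h2, div_le_div_iff₀ hD hD]
      have hc : (0:ℝ) ≤ Real.exp ε + 2 * δ - 1 := by linarith
      nlinarith [mul_nonneg hc (by linarith : (0:ℝ) ≤ x + 1),
        mul_nonneg (mul_nonneg (by positivity : (0:ℝ) ≤ Real.exp ε) hc) (by linarith : (0:ℝ) ≤ 1 - x')]
end

section
/- Let d be a positive integer, fix w ∈ {−1, 1}^d, let t⁺ be the number of v ∈ {−1,1}^d with w·v > 0 and t⁻ the number with w·v ≤ 0, and assume 0 < t⁺ ≤ t⁻. Let α be a real with 1/2 < α ≤ 1. For x ∈ [−1,1]^d define A(x) = Σ_{v ∈ {−1,1}^d, w·v > 0} Π_{j=1}^d (1/2 + (1/2)·x_j·v_j) and P(x) = (α/t⁺)·A(x) + ((1−α)/t⁻)·(1 − A(x)). Then for all x ∈ [−1,1]^d: 0 ≤ A(x) ≤ 1 and (1−α)/t⁻ ≤ P(x) ≤ α/t⁺.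 Moreover, the maximum value α/t⁺ is attained whenever x ∈ {−1,1}^d with w·x > 0, and the minimum value (1−α)/t⁻ is attained whenever x ∈ {−1,1}^d with w·x ≤ 0. -/
/-- Bounds and extreme values of the output probability `P(x)` of the multi-dimensional
mechanism (Algorithm 1): with `t⁺ = |{v : w·v > 0}|`, `t⁻ = |{v : w·v ≤ 0}|`,
`0 < t⁺ ≤ t⁻`, `1/2 < α ≤ 1`,
`A(x) = ∑_{v : w·v > 0} ∏ j (1/2 + x_j v_j/2)` and
`P(x) = (α/t⁺)A(x) + ((1−α)/t⁻)(1 − A(x))`, one has `0 ≤ A(x) ≤ 1` and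
`(1−α)/t⁻ ≤ P(x) ≤ α/t⁺` for all `x ∈ [−1,1]^d`; moreover `P(x) = α/t⁺` whenever
`x ∈ {−1,1}^d` with `w·x > 0` and `P(x) = (1−α)/t⁻` whenever `x ∈ {−1,1}^d` with
`w·x ≤ 0`. -/
theorem stmt_5 (d : ℕ) (hd : 0 < d)
    (w : Fin d → ℝ) (hw : ∀ j, w j = -1 ∨ w j = 1)
    (tp tm : ℕ)
    (htp : tp = ((Fintype.piFinset fun _ : Fin d => ({-1, 1} : Finset ℝ)).filter
        (fun v => 0 < ∑ j, w j * v j)).card)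
    (htm : tm = ((Fintype.piFinset fun _ : Fin d => ({-1, 1} : Finset ℝ)).filter
        (fun v => (∑ j, w j * v j) ≤ 0)).card)
    (htp0 : 0 < tp) (htptm : tp ≤ tm)
    (α : ℝ) (hα1 : 1 / 2 < α) (hα2 : α ≤ 1)
    (A P : (Fin d → ℝ) → ℝ)
    (hA : ∀ x, A x = ∑ v ∈ (Fintype.piFinset fun _ : Fin d => ({-1, 1} : Finset ℝ)).filter
        (fun v => 0 < ∑ j, w j * v j), ∏ j, (1 / 2 + 1 / 2 * x j * v j))
    (hP : ∀ x, P x = α / tp * A x + (1 - α) / tm * (1 - A x)) :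
    (∀ x : Fin d → ℝ, (∀ j, x j ∈ Set.Icc (-1 : ℝ) 1) →
      (0 ≤ A x ∧ A x ≤ 1) ∧ (1 - α) / tm ≤ P x ∧ P x ≤ α / tp) ∧
    (∀ x : Fin d → ℝ, (∀ j, x j = -1 ∨ x j = 1) → 0 < ∑ j, w j * x j → P x = α / tp) ∧
    (∀ x : Fin d → ℝ, (∀ j, x j = -1 ∨ x j = 1) → (∑ j, w j * x j) ≤ 0 →
      P x = (1 - α) / tm) := by

  have htm0 : 0 < tm := lt_of_lt_of_le htp0 htptm
  have htpR : (0:ℝ) < tp := by exact_mod_cast htp0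
  have htmR : (0:ℝ) < tm := by exact_mod_cast htm0
  have htpmR : (tp:ℝ) ≤ tm := by exact_mod_cast htptm
  have hcb : (1 - α) / tm ≤ α / tp := by
    rw [div_le_div_iff₀ htmR htpR]
    nlinarith
  have htot : ∀ x : Fin d → ℝ,
      ∑ v ∈ Fintype.piFinset (fun _ : Fin d => ({-1, 1} : Finset ℝ)),
        ∏ j, (1 / 2 + 1 / 2 * x j * v j) = 1 := by
    intro x
    have h2 : ∑ v ∈ Fintype.piFinset (fun _ : Fin d => ({-1, 1} : Finset ℝ)),
        ∏ j, (1 / 2 + 1 / 2 * x j * v j)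
        = ∏ j, ∑ vj ∈ ({-1, 1} : Finset ℝ), (1 / 2 + 1 / 2 * x j * vj) :=
      Finset.sum_prod_piFinset ({-1, 1} : Finset ℝ) (fun j a => 1 / 2 + 1 / 2 * x j * a)
    rw [h2]
    have h1 : ∀ j : Fin d, ∑ vj ∈ ({-1, 1} : Finset ℝ), (1 / 2 + 1 / 2 * x j * vj) = 1 := by
      intro j
      rw [Finset.sum_pair (by norm_num : (-1:ℝ) ≠ 1)]
      ring
    exact Finset.prod_eq_one fun j _ => h1 j
  have hind : ∀ x v : Fin d → ℝ, (∀ j, x j = -1 ∨ x j = 1) → (∀ j, v j = -1 ∨ v j = 1) →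
      ∏ j, (1 / 2 + 1 / 2 * x j * v j) = if v = x then 1 else 0 := by
    intro x v hx hv
    by_cases hvx : v = x
    · subst hvx
      rw [if_pos rfl]
      apply Finset.prod_eq_one
      intro j _
      rcases hv j with h | h <;> rw [h] <;> ring
    · rw [if_neg hvx]
      have : ∃ j, v j ≠ x j := by
        by_contra h
        push_neg at h
        exact hvx (funext h)
      obtain ⟨j, hj⟩ := this
      apply Finset.prod_eq_zero (Finset.mem_univ j)
      rcases hv j with h1 | h1 <;> rcases hx j with h2 | h2 <;>
        simp [h1, h2] at hj ⊢ <;> ring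
  refine ⟨?_, ?_, ?_⟩
  · intro x hx
    have hA0 : 0 ≤ A x := by
      rw [hA]
      apply Finset.sum_nonneg
      intro v hv
      apply Finset.prod_nonneg
      intro j _
      have hvj : v j ∈ ({-1, 1} : Finset ℝ) :=
        Fintype.mem_piFinset.mp (Finset.mem_filter.mp hv).1 j
      have hxj := hx j
      simp only [Finset.mem_insert, Finset.mem_singleton] at hvj
      rcases hvj with h | h <;> rw [h] <;> simp at hxj <;> nlinarith [hxj.1, hxj.2]
    have hA1 : A x ≤ 1 := by
      rw [hA]
      refine le_trans (Finset.sum_le_sum_of_subset_of_nonneg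
        (Finset.filter_subset _ _) ?_) (le_of_eq (htot x))
      intro v hv _
      apply Finset.prod_nonneg
      intro j _
      have hvj : v j ∈ ({-1, 1} : Finset ℝ) := Fintype.mem_piFinset.mp hv j
      have hxj := hx j
      simp only [Finset.mem_insert, Finset.mem_singleton] at hvj
      rcases hvj with h | h <;> rw [h] <;> simp at hxj <;> nlinarith [hxj.1, hxj.2]
    refine ⟨⟨hA0, hA1⟩, ?_, ?_⟩
    · rw [hP]
      nlinarith [mul_nonneg hA0 (sub_nonneg.mpr hcb)]
    · rw [hP]
      nlinarith [mul_nonneg (sub_nonneg.mpr hA1) (sub_nonneg.mpr hcb)]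
  · intro x hx hwx
    have hxmem : x ∈ (Fintype.piFinset fun _ : Fin d => ({-1, 1} : Finset ℝ)).filter
        (fun v => 0 < ∑ j, w j * v j) := by
      rw [Finset.mem_filter]
      exact ⟨Fintype.mem_piFinset.mpr fun j => by rcases hx j with h | h <;> simp [h], hwx⟩
    have hAx : A x = 1 := by
      rw [hA]
      rw [Finset.sum_eq_single_of_mem x hxmem]
      · rw [hind x x hx hx, if_pos rfl]
      · intro v hv hvx
        have hv' : ∀ j, v j = -1 ∨ v j = 1 := by
          intro j
          have := Fintype.mem_piFinset.mp (Finset.mem_filter.mp hv).1 j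
          simpa using this
        rw [hind x v hx hv', if_neg hvx]
    rw [hP, hAx]
    ring
  · intro x hx hwx
    have hAx : A x = 0 := by
      rw [hA]
      apply Finset.sum_eq_zero
      intro v hv
      have hv' : ∀ j, v j = -1 ∨ v j = 1 := by
        intro j
        have := Fintype.mem_piFinset.mp (Finset.mem_filter.mp hv).1 j
        simpa using this
      have hvx : v ≠ x := by
        intro h
        subst h
        exact absurd (Finset.mem_filter.mp hv).2 (not_lt.mpr hwx)
      rw [hind x v hx hv', if_neg hvx]
    rw [hP, hAx]
    ring
end

section
/- Let m be a positive integer and x ∈ [−1, 1]^m. (i) If m is even, then Σ_{u ∈ {−1,1}^m} Σ_{v ∈ {−1,1}^m : u·v = 0} Π_{j=1}^m (1/2 + (1/2)·x_j·v_j) = C(m, m/2). (ii) If m is odd, then Σ_{u ∈ {−1,1}^m} Σ_{v ∈ {−1,1}^m : u·v = 1} Π_{j=1}^m (1/2 + (1/2)·x_j·v_j) = C(m, (m+1)/2). -/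
open Finset

noncomputable abbrev Sm8 (m : ℕ) : Finset (Fin m → ℝ) :=
  Fintype.piFinset fun _ : Fin m => ({-1, 1} : Finset ℝ)

private lemma sum_prod_one (m : ℕ) (x : Fin m → ℝ) :
    ∑ v ∈ Sm8 m, ∏ j, (1 / 2 + 1 / 2 * x j * v j) = 1 := by
  have h := Finset.prod_univ_sum (κ := fun _ : Fin m => ℝ)
    (t := fun _ : Fin m => ({-1, 1} : Finset ℝ))
    (f := fun j a => 1 / 2 + 1 / 2 * x j * a)
  rw [← h]
  have : ∀ j : Fin m, ∑ a ∈ ({-1, 1} : Finset ℝ), (1 / 2 + 1 / 2 * x j * a) = 1 := by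
    intro j
    rw [Finset.sum_pair (by norm_num : (-1 : ℝ) ≠ 1)]
    ring
  rw [Finset.prod_congr rfl fun j _ => this j, Finset.prod_const_one]

private lemma sgn_sum (m : ℕ) (w : Fin m → ℝ) (hw : ∀ j, w j ∈ ({-1, 1} : Finset ℝ)) :
    ∑ j, w j = ((Finset.univ.filter (fun j => w j = 1)).card : ℝ)
      - ((m : ℝ) - (Finset.univ.filter (fun j => w j = 1)).card) := by
  classical
  set A := Finset.univ.filter (fun j => w j = 1) with hA
  rw [← Finset.sum_filter_add_sum_filter_not Finset.univ (fun j => w j = 1)]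
  have e1 : ∀ j ∈ A, w j = (1 : ℝ) := fun j hj => (Finset.mem_filter.mp hj).2
  have e2 : ∀ j ∈ Finset.univ.filter (fun j => ¬ w j = 1), w j = (-1 : ℝ) := by
    intro j hj
    have h := hw j
    simp only [Finset.mem_insert, Finset.mem_singleton] at h
    have hj' := (Finset.mem_filter.mp hj).2
    rcases h with h | h
    · exact h
    · exact absurd h hj'
  rw [Finset.sum_congr rfl e1, Finset.sum_congr rfl e2, Finset.sum_const, Finset.sum_const]
  have hm' : A.card + (Finset.univ.filter (fun j => ¬ w j = 1)).card = m := by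
    simpa using Finset.card_filter_add_card_filter_not
      (s := (Finset.univ : Finset (Fin m))) (p := fun j => w j = 1)
  have hc : ((Finset.univ.filter (fun j => ¬ w j = 1)).card : ℝ) = (m : ℝ) - A.card := by
    have := congrArg (fun n : ℕ => (n : ℝ)) hm'
    push_cast at this
    linarith
  rw [nsmul_eq_mul, nsmul_eq_mul, hc]
  ring

private lemma count_sum_eq (m k : ℕ) (c : ℝ) (hk : (2 * k : ℝ) = m + c) :
    ((Sm8 m).filter (fun w => ∑ j, w j = c)).card = m.choose k := by
  classical
  have key : ((Sm8 m).filter (fun w => ∑ j, w j = c)).card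
      = ((Finset.univ : Finset (Fin m)).powersetCard k).card := by
    refine Finset.card_nbij' (fun w => Finset.univ.filter (fun j => w j = 1))
      (fun A => fun j => if j ∈ A then (1 : ℝ) else -1) ?_ ?_ ?_ ?_
    · intro w hw
      rw [Finset.mem_coe, Finset.mem_filter] at hw
      obtain ⟨hw1, hw2⟩ := hw
      rw [Fintype.mem_piFinset] at hw1
      rw [Finset.mem_coe, Finset.mem_powersetCard]
      refine ⟨Finset.filter_subset _ _, ?_⟩
      rw [sgn_sum m w hw1] at hw2
      have h2 : (2 * ((Finset.univ.filter (fun j => w j = 1)).card) : ℝ) = 2 * k := by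
        rw [hk]; linarith
      exact_mod_cast (by linarith : (((Finset.univ.filter (fun j => w j = 1)).card) : ℝ) = (k : ℝ))
    · intro A hA
      rw [Finset.mem_coe, Finset.mem_powersetCard] at hA
      rw [Finset.mem_coe, Finset.mem_filter]
      have hmem : ∀ j, (if j ∈ A then (1 : ℝ) else -1) ∈ ({-1, 1} : Finset ℝ) := by
        intro j; by_cases h : j ∈ A <;> simp [h]
      constructor
      · rw [Fintype.mem_piFinset]; exact hmem
      · have hs := sgn_sum m _ hmem
        have hfilt : Finset.univ.filter (fun j => (if j ∈ A then (1:ℝ) else -1) = 1) = A := by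
          ext j
          simp only [Finset.mem_filter, Finset.mem_univ, true_and]
          by_cases h : j ∈ A
          · simp [h]
          · norm_num [h]
        rw [hfilt] at hs
        rw [hs, hA.2]
        linarith
    · intro w hw
      rw [Finset.mem_coe, Finset.mem_filter] at hw
      have hw1 := hw.1
      rw [Fintype.mem_piFinset] at hw1
      funext j
      show (if j ∈ Finset.univ.filter (fun j => w j = 1) then (1:ℝ) else -1) = w j
      by_cases h : w j = 1
      · rw [if_pos (by simp [h]), h]
      · have hn : j ∉ Finset.univ.filter (fun j => w j = 1) := by simp [h]
        rw [if_neg hn]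
        have h' := hw1 j
        simp only [Finset.mem_insert, Finset.mem_singleton] at h'
        rcases h' with h' | h'
        · rw [h']
        · exact absurd h' h
    · intro A hA
      ext j
      simp only [Finset.mem_filter, Finset.mem_univ, true_and]
      by_cases h : j ∈ A
      · simp [h]
      · norm_num [h]
  rw [key, Finset.card_powersetCard]
  simp

private lemma count_inner_eq (m k : ℕ) (c : ℝ) (hk : (2 * k : ℝ) = m + c)
    (v : Fin m → ℝ) (hv : v ∈ Sm8 m) :
    ((Sm8 m).filter (fun u => ∑ j, u j * v j = c)).card = m.choose k := by
  classical
  rw [Fintype.mem_piFinset] at hv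
  have hv2 : ∀ j, v j * v j = 1 := by
    intro j
    have h := hv j
    simp only [Finset.mem_insert, Finset.mem_singleton] at h
    rcases h with h | h <;> rw [h] <;> norm_num
  rw [← count_sum_eq m k c hk]
  refine Finset.card_nbij' (fun u => fun j => u j * v j) (fun w => fun j => w j * v j)
    ?_ ?_ ?_ ?_
  · intro u hu
    rw [Finset.mem_coe, Finset.mem_filter] at hu
    obtain ⟨hu1, hu2⟩ := hu
    rw [Fintype.mem_piFinset] at hu1
    refine Finset.mem_filter.mpr ⟨Fintype.mem_piFinset.mpr ?_, ?_⟩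
    · intro j
      have h1 := hu1 j
      have h2 := hv j
      simp only [Finset.mem_insert, Finset.mem_singleton] at h1 h2 ⊢
      rcases h1 with h | h <;> rcases h2 with h' | h' <;>
        (show u j * v j = -1 ∨ u j * v j = 1) <;> rw [h, h'] <;> norm_num
    · exact hu2
  · intro w hw
    rw [Finset.mem_coe, Finset.mem_filter] at hw
    obtain ⟨hw1, hw2⟩ := hw
    rw [Fintype.mem_piFinset] at hw1
    refine Finset.mem_filter.mpr ⟨Fintype.mem_piFinset.mpr ?_, ?_⟩
    · intro j
      have h1 := hw1 j
      have h2 := hv j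
      simp only [Finset.mem_insert, Finset.mem_singleton] at h1 h2 ⊢
      rcases h1 with h | h <;> rcases h2 with h' | h' <;>
        (show w j * v j = -1 ∨ w j * v j = 1) <;> rw [h, h'] <;> norm_num
    · show ∑ j, (w j * v j) * v j = c
      calc ∑ j, (w j * v j) * v j = ∑ j, w j * (v j * v j) :=
            Finset.sum_congr rfl fun j _ => by ring
        _ = ∑ j, w j := by simp [hv2]
        _ = c := hw2
  · intro u hu
    funext j
    show (u j * v j) * v j = u j
    calc (u j * v j) * v j = u j * (v j * v j) := by ring
      _ = u j := by rw [hv2 j]; ring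
  · intro w hw
    funext j
    show (w j * v j) * v j = w j
    calc (w j * v j) * v j = w j * (v j * v j) := by ring
      _ = w j := by rw [hv2 j]; ring

private lemma main_eq (m k : ℕ) (c : ℝ) (hk : (2 * k : ℝ) = m + c) (x : Fin m → ℝ) :
    ∑ u ∈ Sm8 m, ∑ v ∈ (Sm8 m).filter (fun v => (∑ j, u j * v j) = c),
      ∏ j, (1 / 2 + 1 / 2 * x j * v j) = m.choose k := by
  classical
  have step1 : ∀ u : Fin m → ℝ, ∑ v ∈ (Sm8 m).filter (fun v => (∑ j, u j * v j) = c),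
      ∏ j, (1 / 2 + 1 / 2 * x j * v j)
      = ∑ v ∈ Sm8 m, (if (∑ j, u j * v j) = c then ∏ j, (1 / 2 + 1 / 2 * x j * v j) else 0) :=
    fun u => Finset.sum_filter _ _
  simp_rw [step1]
  rw [Finset.sum_comm]
  have step2 : ∀ v ∈ Sm8 m, ∑ u ∈ Sm8 m,
      (if (∑ j, u j * v j) = c then ∏ j, (1 / 2 + 1 / 2 * x j * v j) else 0)
      = (m.choose k : ℝ) * ∏ j, (1 / 2 + 1 / 2 * x j * v j) := by
    intro v hv
    rw [← Finset.sum_filter, Finset.sum_const, count_inner_eq m k c hk v hv, nsmul_eq_mul]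
  rw [Finset.sum_congr rfl step2, ← Finset.mul_sum, sum_prod_one m x, mul_one]

/-- Combinatorial identity used in the unbiasedness proof of Algorithm 1: for
`x ∈ [−1,1]^m`, if `m` is even then
`∑_{u ∈ {−1,1}^m} ∑_{v : u·v = 0} ∏ j (1/2 + x_j v_j / 2) = C(m, m/2)`, and if `m` is
odd then `∑_{u ∈ {−1,1}^m} ∑_{v : u·v = 1} ∏ j (1/2 + x_j v_j / 2) = C(m, (m+1)/2)`. -/
theorem stmt_8 (m : ℕ) (hm : 0 < m) (x : Fin m → ℝ)
    (hx : ∀ j, x j ∈ Set.Icc (-1 : ℝ) 1)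
    (S : Finset (Fin m → ℝ))
    (hS : S = Fintype.piFinset fun _ : Fin m => ({-1, 1} : Finset ℝ)) :
    (Even m →
      ∑ u ∈ S, ∑ v ∈ S.filter (fun v => (∑ j, u j * v j) = 0),
        ∏ j, (1 / 2 + 1 / 2 * x j * v j) = m.choose (m / 2)) ∧
    (Odd m →
      ∑ u ∈ S, ∑ v ∈ S.filter (fun v => (∑ j, u j * v j) = 1),
        ∏ j, (1 / 2 + 1 / 2 * x j * v j) = m.choose ((m + 1) / 2)) := by
  subst hS
  constructor
  · intro he
    apply main_eq m (m / 2) 0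
    have h : 2 * (m / 2) = m := Nat.two_mul_div_two_of_even he
    rw [add_zero]
    exact_mod_cast h
  · intro ho
    apply main_eq m ((m + 1) / 2) 1
    have h : 2 * ((m + 1) / 2) = m + 1 := Nat.two_mul_div_two_of_even (by simpa using ho.add_one)
    exact_mod_cast h
end

section
/- Let ε > 0 and δ ≥ 0 be reals, and let k, d be integers with 1 ≤ k ≤ d. Set c = (e^(ε/k) + 1)/(e^(ε/k) + 2δ/k − 1), and for x ∈ [−1, 1] set p = ((e^(ε/k) + 2δ/k − 1)·x + e^(ε/k) + 1)/(2(e^(ε/k) + 1)). Consider the random variable Y taking value (d/k)·c with probability (k/d)·p, value −(d/k)·c with probability (k/d)·(1 − p), and value 0 with probability 1 − k/d. Then E[Y] = x and Var[Y] = (d/k)·c² − x²; concretely, (d/k)·c·(k/d)·p − (d/k)·c·(k/d)·(1 − p) = x, and ((d/k)·c)²·(k/d) − x² = (d/k)·((e^(ε/k)+1)/(e^(ε/k)+2δ/k−1))² − x². -/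
/-- Per-dimension behavior of the paper's Algorithm 3: the random variable `Y` taking
value `(d/k)·c` with probability `(k/d)·p`, `−(d/k)·c` with probability `(k/d)·(1−p)`,
and `0` with probability `1 − k/d`, satisfies `E[Y] = x` and
`Var[Y] = (d/k)·c² − x²`. -/
theorem stmt_10 (ε δ : ℝ) (hε : 0 < ε) (hδ : 0 ≤ δ)
    (k d : ℕ) (hk : 1 ≤ k) (hkd : k ≤ d)
    (c : ℝ) (hc : c = (Real.exp (ε / k) + 1) / (Real.exp (ε / k) + 2 * δ / k - 1))
    (x : ℝ) (hx : x ∈ Set.Icc (-1 : ℝ) 1)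
    (p : ℝ)
    (hp : p = ((Real.exp (ε / k) + 2 * δ / k - 1) * x + Real.exp (ε / k) + 1) /
      (2 * (Real.exp (ε / k) + 1))) :
    (d : ℝ) / k * c * ((k : ℝ) / d * p) - (d : ℝ) / k * c * ((k : ℝ) / d * (1 - p)) = x ∧
    ((d : ℝ) / k * c) ^ 2 * ((k : ℝ) / d) - x ^ 2 =
      (d : ℝ) / k * ((Real.exp (ε / k) + 1) / (Real.exp (ε / k) + 2 * δ / k - 1)) ^ 2
        - x ^ 2 := by
  have hk0 : (0:ℝ) < (k:ℝ) := by exact_mod_cast hk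
  have hd0 : (0:ℝ) < (d:ℝ) := lt_of_lt_of_le hk0 (by exact_mod_cast hkd)
  have he : 1 < Real.exp (ε / k) := by
    have := Real.add_one_le_exp (ε / k)
    have h2 : 0 < ε / k := by positivity
    linarith
  have ht : 0 ≤ 2 * δ / k := by positivity
  subst hc hp
  set e := Real.exp (ε / k) with hedef
  set t := 2 * δ / k with htdef
  have hA : (0:ℝ) < e + 1 := by linarith
  have hB : (0:ℝ) < e + t - 1 := by linarith
  clear_value e t
  constructor
  · field_simp
    ring
  · field_simp
end

section
/- Let ε > 0 be a real and δ a real with 0 ≤ δ ≤ 1. Set s = √(e^ε·(1 − δ) + δ), p = (e^ε − s)/(e^ε − 1), and q = (s − 1)/(e^ε − 1). Then p + q = 1, 0 ≤ q ≤ p ≤ 1, and p·(1 − q) = e^ε·q·(1 − p) + δ (equivalently, since p + q = 1, p² = e^ε·q² + δ). -/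
/-- SPRR-ALDP: with `s = √(e^ε(1−δ) + δ)`, `p = (e^ε − s)/(e^ε − 1)` and
`q = (s − 1)/(e^ε − 1)`, one has `p + q = 1`, `0 ≤ q ≤ p ≤ 1`, and the privacy
constraint holds with equality: `p(1−q) = e^ε q(1−p) + δ`, equivalently
`p² = e^ε q² + δ`. -/
theorem stmt_15 (ε δ : ℝ) (hε : 0 < ε) (hδ0 : 0 ≤ δ) (hδ1 : δ ≤ 1)
    (s p q : ℝ)
    (hs : s = Real.sqrt (Real.exp ε * (1 - δ) + δ))
    (hp : p = (Real.exp ε - s) / (Real.exp ε - 1))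
    (hq : q = (s - 1) / (Real.exp ε - 1)) :
    p + q = 1 ∧ (0 ≤ q ∧ q ≤ p ∧ p ≤ 1) ∧
    p * (1 - q) = Real.exp ε * q * (1 - p) + δ ∧
    p ^ 2 = Real.exp ε * q ^ 2 + δ := by
  set E := Real.exp ε with hE
  have hE1 : 1 < E := Real.one_lt_exp_iff.mpr hε
  have hEd : 0 < E - 1 := by linarith
  have harg : 0 ≤ E * (1 - δ) + δ := by nlinarith
  have hs0 : 0 ≤ s := by rw [hs]; exact Real.sqrt_nonneg _
  have hs2 : s ^ 2 = E * (1 - δ) + δ := by rw [hs]; exact Real.sq_sqrt harg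
  have hs1 : 1 ≤ s := by nlinarith
  have hsE : s ^ 2 ≤ E := by nlinarith
  have h2s : 2 * s ≤ E + 1 := by nlinarith [sq_nonneg (s - 1)]
  have hpq : p + q = 1 := by rw [hp, hq]; field_simp; ring
  have hkey : p ^ 2 = E * q ^ 2 + δ := by
    rw [hp, hq]; field_simp; nlinarith [hs2]
  refine ⟨hpq, ⟨?_, ?_, ?_⟩, ?_, hkey⟩
  · rw [hq]; exact div_nonneg (by linarith) (by linarith)
  · rw [hp, hq, div_le_div_iff₀ hEd hEd]; nlinarith
  · rw [hp, div_le_one hEd]; linarith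
  · have h1 : 1 - q = p := by linarith
    have h2 : 1 - p = q := by linarith
    rw [h1, h2]; nlinarith [hkey]
end

section
/- Let ε > 0 be a real and δ a real with 0 ≤ δ < 1. Set s = √(e^ε·(1 − δ) + δ), p = (e^ε − s)/(e^ε − 1), and q = (s − 1)/(e^ε − 1). Then e^ε + 1 − 2s > 0 and q·(1 − q)/(p − q)² = (s − 1)·(e^ε − s)/(e^ε + 1 − 2s)². -/
/-- Closed form of the (per-user) approximate variance of the SPRR-ALDP frequency
estimator: with `s = √(e^ε(1−δ) + δ)`, `p = (e^ε − s)/(e^ε − 1)`,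
`q = (s − 1)/(e^ε − 1)`, one has `e^ε + 1 − 2s > 0` and
`q(1−q)/(p−q)² = (s − 1)(e^ε − s)/(e^ε + 1 − 2s)²`. -/
theorem stmt_16 (ε δ : ℝ) (hε : 0 < ε) (hδ0 : 0 ≤ δ) (hδ1 : δ < 1)
    (s p q : ℝ)
    (hs : s = Real.sqrt (Real.exp ε * (1 - δ) + δ))
    (hp : p = (Real.exp ε - s) / (Real.exp ε - 1))
    (hq : q = (s - 1) / (Real.exp ε - 1)) :
    0 < Real.exp ε + 1 - 2 * s ∧
    q * (1 - q) / (p - q) ^ 2 =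
      (s - 1) * (Real.exp ε - s) / (Real.exp ε + 1 - 2 * s) ^ 2 := by
  set E := Real.exp ε with hE
  have hE1 : 1 < E := by
    have := Real.add_one_le_exp ε
    rw [hE]; linarith
  have hE0 : (0:ℝ) ≤ E := le_of_lt (lt_trans one_pos hE1)
  have hsle : s ≤ Real.sqrt E := by
    rw [hs]
    apply Real.sqrt_le_sqrt
    nlinarith
  have hpos : 0 < E + 1 - 2 * s := by
    have h1 : (Real.sqrt E - 1) ^ 2 > 0 := by
      have hne : Real.sqrt E - 1 ≠ 0 := by
        intro h
        have := Real.sq_sqrt hE0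
        have h1 : Real.sqrt E = 1 := by linarith
        rw [h1] at this
        nlinarith
      exact pow_two_pos_of_ne_zero hne
    have h2 : Real.sqrt E ^ 2 = E := Real.sq_sqrt hE0
    nlinarith
  refine ⟨hpos, ?_⟩
  have hEne : E - 1 ≠ 0 := by linarith
  have hne : E + 1 - 2 * s ≠ 0 := ne_of_gt hpos
  have h1q : 1 - q = (E - s) / (E - 1) := by
    rw [hq]; field_simp; ring
  have hpq : p - q = (E + 1 - 2 * s) / (E - 1) := by
    rw [hp, hq]; field_simp; ring
  rw [h1q, hpq, hq, div_pow, div_mul_div_comm]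
  rw [div_div_div_eq]
  rw [mul_comm ((s - 1) * (E - s)) ((E - 1) ^ 2)]
  rw [show (E - 1) * (E - 1) = (E - 1) ^ 2 by ring]
  rw [mul_div_mul_left _ _ (pow_ne_zero 2 hEne)]
end

section
/- Let d ≥ 2 be an even integer, ε a real, and set C_d = 2^(d−1) − (1/2)·C(d, d/2). Then: (i) with α = e^ε·C_d/((e^ε − 1)·C_d + 2^d), one has α/C_d = e^ε·(1 − α)/(2^d − C_d); and (ii) with α' = e^ε·(2^d − C_d)/(e^ε·(2^d − C_d) + C_d), one has α'/(2^d − C_d) = e^ε·(1 − α')/C_d. (These are the corrected Bernoulli probabilities that make Duchi et al.'s multi-dimensional mechanism satisfy ε-local differential privacy when d is even, for the two conventions T⁺ = {w : w·v > 0} with |T⁺| = C_d, |T⁻| = 2^d − C_d, and T⁺ = {w : w·v ≥ 0} with |T⁺| = 2^d − C_d, |T⁻| = C_d, respectively.) -/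
lemma aux_choose_lt (d : ℕ) (hd : 2 ≤ d) : d.choose (d / 2) < 2 ^ d := by
  have hsum := Nat.sum_range_choose d
  have hsub : ({0, d / 2} : Finset ℕ) ⊆ Finset.range (d + 1) := by
    intro x hx
    simp only [Finset.mem_insert, Finset.mem_singleton] at hx
    rcases hx with rfl | rfl <;> simp [Finset.mem_range] <;> omega
  have hne : (0 : ℕ) ≠ d / 2 := by omega
  have hle : d.choose 0 + d.choose (d / 2) ≤ ∑ i ∈ Finset.range (d + 1), d.choose i := by
    calc d.choose 0 + d.choose (d / 2)
        = ∑ i ∈ ({0, d / 2} : Finset ℕ), d.choose i := by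
          rw [Finset.sum_insert (by simpa using hne), Finset.sum_singleton]
      _ ≤ _ := Finset.sum_le_sum_of_subset hsub
  simp only [Nat.choose_zero_right] at hle
  omega

/-- Corrected Bernoulli probabilities making Duchi et al.'s mechanism satisfy ε-LDP for
even `d`: with `C_d = 2^(d−1) − (1/2)·C(d, d/2)`, (i) `α = e^ε C_d/((e^ε−1)C_d + 2^d)`
satisfies `α/C_d = e^ε(1−α)/(2^d − C_d)`, and (ii)
`α' = e^ε(2^d − C_d)/(e^ε(2^d − C_d) + C_d)` satisfies
`α'/(2^d − C_d) = e^ε(1−α')/C_d`. -/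
theorem stmt_18 (d : ℕ) (hd : 2 ≤ d) (heven : Even d) (ε : ℝ)
    (Cd : ℝ) (hCd : Cd = 2 ^ (d - 1) - (1 / 2) * d.choose (d / 2)) :
    (∀ α : ℝ, α = Real.exp ε * Cd / ((Real.exp ε - 1) * Cd + 2 ^ d) →
      α / Cd = Real.exp ε * (1 - α) / (2 ^ d - Cd)) ∧
    (∀ α' : ℝ, α' = Real.exp ε * (2 ^ d - Cd) / (Real.exp ε * (2 ^ d - Cd) + Cd) →
      α' / (2 ^ d - Cd) = Real.exp ε * (1 - α') / Cd) := by
  have hE : (0 : ℝ) < Real.exp ε := Real.exp_pos ε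
  have hpow : (2 : ℝ) ^ (d - 1) * 2 = 2 ^ d := by
    rw [← pow_succ]
    congr 1
    omega
  have hCR : (d.choose (d / 2) : ℝ) < 2 ^ d := by
    exact_mod_cast aux_choose_lt d hd
  have hCd0 : 0 < Cd := by
    rw [hCd]
    nlinarith
  have hCd1 : Cd < 2 ^ d := by
    have : (0 : ℝ) ≤ (d.choose (d / 2) : ℝ) := by positivity
    rw [hCd]
    nlinarith
  have h1 : (0 : ℝ) < (Real.exp ε - 1) * Cd + 2 ^ d := by nlinarith
  have h2 : (0 : ℝ) < Real.exp ε * (2 ^ d - Cd) + Cd := by nlinarith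
  have h3 : (0:ℝ) < 2 ^ d - Cd := by linarith
  constructor
  · intro α hα
    rw [hα, div_eq_div_iff hCd0.ne' h3.ne', one_sub_div h1.ne']
    field_simp
    ring
  · intro α' hα'
    rw [hα', div_eq_div_iff h3.ne' hCd0.ne']
    field_simp
    ring
end

section
/- Let d ≥ 2 be an even integer and ε a real, and set C_d = 2^(d−1) − (1/2)·C(d, d/2). Then e^ε/(e^ε + 1) > C_d·e^ε/(C_d·e^ε + (2^d − C_d)). Consequently, Duchi et al.'s multi-dimensional mechanism, which uses Bernoulli probability α = e^ε/(e^ε + 1), violates the condition α ≤ |T⁺|·e^ε/(|T⁺|·e^ε + |T⁻|) required for ε-local differential privacy when d is even (where |T⁺| = C_d and |T⁻| = 2^d − C_d). -/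
/-- Duchi et al.'s mechanism with `α = e^ε/(e^ε + 1)` violates ε-LDP for even `d`:
with `C_d = 2^(d−1) − (1/2)·C(d, d/2)` (so `|T⁺| = C_d`, `|T⁻| = 2^d − C_d`),
`e^ε/(e^ε + 1) > C_d·e^ε/(C_d·e^ε + (2^d − C_d))`, i.e. the required condition
`α ≤ |T⁺|e^ε/(|T⁺|e^ε + |T⁻|)` fails. -/
theorem stmt_19 (d : ℕ) (hd : 2 ≤ d) (heven : Even d) (ε : ℝ)
    (Cd : ℝ) (hCd : Cd = 2 ^ (d - 1) - (1 / 2) * d.choose (d / 2)) :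
    Cd * Real.exp ε / (Cd * Real.exp ε + (2 ^ d - Cd)) < Real.exp ε / (Real.exp ε + 1) ∧
    ¬ (Real.exp ε / (Real.exp ε + 1) ≤
        Cd * Real.exp ε / (Cd * Real.exp ε + (2 ^ d - Cd))) := by
  have hE := Real.exp_pos ε
  set E := Real.exp ε
  -- middle binomial is positive and strictly less than 2^d
  have hcpos : 0 < d.choose (d / 2) := Nat.choose_pos (Nat.div_le_self d 2)
  have hclt : d.choose (d / 2) < 2 ^ d := by
    rw [← Nat.sum_range_choose d]
    have h2 : d / 2 ∈ Finset.range (d + 1) :=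
      Finset.mem_range.mpr (Nat.lt_succ_of_le (Nat.div_le_self d 2))
    have h0 : (0 : ℕ) ∈ Finset.range (d + 1) := Finset.mem_range.mpr (Nat.succ_pos d)
    have hne : d / 2 ≠ 0 := by omega
    calc d.choose (d / 2) < d.choose (d / 2) + d.choose 0 := by simp
      _ ≤ ∑ i ∈ Finset.range (d + 1), d.choose i := by
          have := Finset.add_sum_erase _ (d.choose) h2
          have h0' : (0 : ℕ) ∈ (Finset.range (d + 1)).erase (d / 2) :=
            Finset.mem_erase.mpr ⟨fun h => hne h.symm, h0⟩
          calc d.choose (d / 2) + d.choose 0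
              ≤ d.choose (d / 2) + ∑ i ∈ (Finset.range (d + 1)).erase (d / 2), d.choose i := by
                gcongr
                exact Finset.single_le_sum (fun i _ => Nat.zero_le _) h0'
            _ = _ := this
  have hcR : (0 : ℝ) < (d.choose (d / 2) : ℝ) := by exact_mod_cast hcpos
  have hcltR : ((d.choose (d / 2) : ℝ)) < 2 ^ d := by exact_mod_cast hclt
  have hpow : (2 : ℝ) ^ d = 2 * 2 ^ (d - 1) := by
    rw [← pow_succ']
    congr 1
    omega
  have hCdpos : 0 < Cd := by rw [hCd]; nlinarith
  have hCdlt : 2 * Cd < 2 ^ d := by rw [hCd]; nlinarith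
  have hden1 : 0 < Cd * E + (2 ^ d - Cd) := by nlinarith
  have hden2 : 0 < E + 1 := by linarith
  have key : Cd * E / (Cd * E + (2 ^ d - Cd)) < E / (E + 1) := by
    rw [div_lt_div_iff₀ hden1 hden2]
    nlinarith
  exact ⟨key, not_le.mpr key⟩
end
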